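/- Suppose $u_\tau \in C^2(\bar\Omega)$ satisfies the regularized Jang equation $\mc(u_\tau) - \tr(k)(u_\tau) = \tau u_\tau$ on a compact manifold-with-boundary $\bar\Omega$ with $u_\tau = \phi$ on $\partial\Omega$, where $0 < \tau \le 1$. Then $\sup_\Omega \tau|u_\tau| \le \max\{3\|k\|_{C^0(\bar\Omega)},\ \tau\|\phi\|_{C^0(\partial\Omega)}\}$. -/

import Mathlib

noncomputable section
open scoped BigOperators

/-- Local coordinates on a chart of the 3-manifold. -/
abbrev E3 : Type := EuclideanSpace ℝ (Fin 3)

/-- Partial derivative in the `i`-th coordinate direction. -/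
def pd (i : Fin 3) (f : E3 → ℝ) (x : E3) : ℝ :=
  fderiv ℝ f x (EuclideanSpace.single i 1)

/-- The inverse metric `g^{ij}`. -/
def ginv (g : E3 → Matrix (Fin 3) (Fin 3) ℝ) (x : E3) : Matrix (Fin 3) (Fin 3) ℝ :=
  (g x)⁻¹

/-- Christoffel symbols `Γ^l_{ij}` of the metric `g`. -/
def christoffel (g : E3 → Matrix (Fin 3) (Fin 3) ℝ) (l i j : Fin 3) (x : E3) : ℝ :=
  (1 / 2) * ∑ m, ginv g x l m *
    (pd i (fun y => g y m j) x + pd j (fun y => g y m i) x - pd m (fun y => g y i j) x)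

/-- Covariant Hessian `D_iD_j u` of `u`. -/
def hess (g : E3 → Matrix (Fin 3) (Fin 3) ℝ) (u : E3 → ℝ) (i j : Fin 3) (x : E3) : ℝ :=
  pd i (fun y => pd j u y) x - ∑ l, christoffel g l i j x * pd l u x

/-- `|Du|² = g^{ij} ∂ᵢu ∂ⱼu`. -/
def gradSq (g : E3 → Matrix (Fin 3) (Fin 3) ℝ) (u : E3 → ℝ) (x : E3) : ℝ :=
  ∑ i, ∑ j, ginv g x i j * pd i u x * pd j u x

/-- The tensor `g^{ij} - uⁱuʲ/(1+|Du|²)` (inverse of the graph metric). -/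
def graphInv (g : E3 → Matrix (Fin 3) (Fin 3) ℝ) (u : E3 → ℝ) (x : E3) (i j : Fin 3) : ℝ :=
  ginv g x i j -
    (∑ a, ginv g x i a * pd a u x) * (∑ b, ginv g x j b * pd b u x) / (1 + gradSq g u x)

/-- Mean curvature `ℋ(u)` of the graph of `u` in `(M × ℝ, g + dt²)`. -/
def mc (g : E3 → Matrix (Fin 3) (Fin 3) ℝ) (u : E3 → ℝ) (x : E3) : ℝ :=
  ∑ i, ∑ j, graphInv g u x i j * hess g u i j x / Real.sqrt (1 + gradSq g u x)

/-- Trace of `k` over the tangent space of the graph of `u`. -/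
def trk (g k : E3 → Matrix (Fin 3) (Fin 3) ℝ) (u : E3 → ℝ) (x : E3) : ℝ :=
  ∑ i, ∑ j, graphInv g u x i j * k x i j

/-!
At an interior maximum `x₀` of `u` the gradient vanishes, so the graph metric reduces to `g` and
`ℋ(u)(x₀) = g^{ij} ∂ᵢ∂ⱼu(x₀)`. The Hessian is negative semidefinite there, and pairing a form
`B ≤ c g` with the positive definite `g⁻¹` gives at most `3c`; hence `ℋ(u)(x₀) ≤ 0` and
`-tr(k)(u)(x₀) ≤ 3‖k‖`, i.e. `τ u(x₀) ≤ 3‖k‖`. A maximum on `∂Ω` is bounded by `φ` instead.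
The lower bound follows by applying this to `-u`, which solves the equation with `-k`.
-/

open Filter Topology

theorem IsLocalMax.deriv_deriv_nonpos {f : ℝ → ℝ} {a : ℝ} (h : IsLocalMax f a)
    (hc : ContinuousAt f a) : deriv (deriv f) a ≤ 0 := by
  by_contra! hpos
  -- the second-derivative test makes `a` also a local minimum, so `f` is locally constant
  have hconst : f =ᶠ[𝓝 a] fun _ => f a :=
    (h.and (isLocalMin_of_deriv_deriv_pos hpos h.deriv_eq_zero hc)).mono
      fun _ hy => le_antisymm hy.1 hy.2
  have hderiv : deriv f =ᶠ[𝓝 a] fun _ => 0 := by simpa using hconst.deriv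
  simp [hderiv.deriv_eq] at hpos

theorem IsLocalMax.fderiv_fderiv_apply_self_nonpos {E : Type*} [NormedAddCommGroup E]
    [NormedSpace ℝ E] {f : E → ℝ} {a : E} (h : IsLocalMax f a) (hf : ContDiffAt ℝ 2 f a)
    (v : E) : fderiv ℝ (fderiv ℝ f) a v v ≤ 0 := by
  set line : ℝ → E := fun t => a + t • v
  have hline : ∀ t, HasDerivAt line v t := fun t => by
    simpa only [id, one_smul] using ((hasDerivAt_id t).smul_const v).const_add a
  have hline0 : line 0 = a := by simp [line]
  have hdiff : ∀ᶠ y in 𝓝 a, DifferentiableAt ℝ f y :=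
    (hf.eventually (by simp)).mono fun _ hy => hy.differentiableAt (by norm_num)
  have hfirst : deriv (f ∘ line) =ᶠ[𝓝 0] fun t => fderiv ℝ f (line t) v := by
    have hcont : Tendsto line (𝓝 0) (𝓝 a) := hline0 ▸ (hline 0).continuousAt.tendsto
    filter_upwards [hcont.eventually hdiff] with t ht
    exact (ht.hasFDerivAt.comp_hasDerivAt t (hline t)).deriv
  have hsecond :
      HasDerivAt (fun t => fderiv ℝ f (line t) v) (fderiv ℝ (fderiv ℝ f) a v v) 0 := by
    have hA : HasFDerivAt (fderiv ℝ f) (fderiv ℝ (fderiv ℝ f) a) (line 0) := by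
      rw [hline0]
      exact ((hf.fderiv_right (m := 1) (by norm_num)).differentiableAt one_ne_zero).hasFDerivAt
    exact ((ContinuousLinearMap.apply ℝ ℝ v).hasFDerivAt.comp _ hA).comp_hasDerivAt 0 (hline 0)
  have hmax : IsLocalMax (f ∘ line) 0 := (hline0 ▸ h).comp_continuous (hline 0).continuousAt
  calc fderiv ℝ (fderiv ℝ f) a v v = deriv (deriv (f ∘ line)) 0 := by
        rw [hfirst.deriv_eq, hsecond.deriv]
    _ ≤ 0 := hmax.deriv_deriv_nonpos
      (ContinuousAt.comp (hline0 ▸ hf.continuousAt) (hline 0).continuousAt)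

section TraceBound

open scoped MatrixOrder Matrix

variable {n : Type*} [Fintype n]

lemma Matrix.sum_sum_transpose_mul_self_mul (M B : Matrix n n ℝ) :
    ∑ i, ∑ j, (Mᵀ * M) i j * B i j = ∑ m, ∑ i, ∑ j, B i j * M m i * M m j := by
  simp only [Matrix.mul_apply, Matrix.transpose_apply, Finset.sum_mul]
  calc _ = ∑ i, ∑ m, ∑ j, B i j * M m i * M m j := Finset.sum_congr rfl fun i _ => by
        rw [Finset.sum_comm]
        exact Finset.sum_congr rfl fun m _ => Finset.sum_congr rfl fun j _ => by ring
    _ = _ := Finset.sum_comm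

lemma Matrix.PosDef.sum_sum_inv_mul_self [DecidableEq n] {G : Matrix n n ℝ} (hG : G.PosDef) :
    ∑ i, ∑ j, G⁻¹ i j * G i j = Fintype.card n := by
  have hGinvG : G⁻¹ * G = 1 :=
    Matrix.nonsing_inv_mul G ((Matrix.isUnit_iff_isUnit_det G).mp hG.isUnit)
  calc ∑ i, ∑ j, G⁻¹ i j * G i j = (G⁻¹ * G).trace := by
        simp only [Matrix.trace, Matrix.diag, Matrix.mul_apply]
        refine Finset.sum_congr rfl fun i _ => Finset.sum_congr rfl fun j _ => ?_
        rw [← hG.isHermitian.apply j i, star_trivial]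
    _ = Fintype.card n := by simp [hGinvG]

theorem Matrix.PosDef.sum_sum_inv_mul_le [DecidableEq n] {G B : Matrix n n ℝ} (hG : G.PosDef)
    {c : ℝ} (hB : ∀ v : n → ℝ, ∑ i, ∑ j, B i j * v i * v j ≤ c * ∑ i, ∑ j, G i j * v i * v j) :
    ∑ i, ∑ j, G⁻¹ i j * B i j ≤ Fintype.card n * c := by
  -- with `G⁻¹ = MᵀM`, both pairings with `G⁻¹` become sums of the forms over the rows of `M`
  obtain ⟨M, hM⟩ : ∃ M : Matrix n n ℝ, G⁻¹ = Mᵀ * M := by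
    have hsqrt : (CFC.sqrt G⁻¹)ᵀ = CFC.sqrt G⁻¹ := by
      rw [← Matrix.conjTranspose_eq_transpose_of_trivial]
      exact (CFC.sqrt_nonneg G⁻¹).isSelfAdjoint
    exact ⟨CFC.sqrt G⁻¹, by rw [hsqrt, CFC.sqrt_mul_sqrt_self _ hG.inv.posSemidef.nonneg]⟩
  calc ∑ i, ∑ j, G⁻¹ i j * B i j = ∑ m, ∑ i, ∑ j, B i j * M m i * M m j := by
        rw [hM, Matrix.sum_sum_transpose_mul_self_mul]
    _ ≤ ∑ m, c * ∑ i, ∑ j, G i j * M m i * M m j := Finset.sum_le_sum fun m _ => hB (M m)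
    _ = c * ∑ i, ∑ j, G⁻¹ i j * G i j := by
        rw [← Finset.mul_sum, hM, Matrix.sum_sum_transpose_mul_self_mul]
    _ = Fintype.card n * c := by rw [hG.sum_sum_inv_mul_self, mul_comm]

end TraceBound

lemma ContinuousLinearMap.sum_sum_apply_single_mul_mul {ι : Type*} [Fintype ι] [DecidableEq ι]
    (A : EuclideanSpace ℝ ι →L[ℝ] EuclideanSpace ℝ ι →L[ℝ] ℝ) (v : ι → ℝ) :
    ∑ i, ∑ j, A (EuclideanSpace.single i 1) (EuclideanSpace.single j 1) * v i * v j
      = A (∑ i, v i • EuclideanSpace.single i 1) (∑ j, v j • EuclideanSpace.single j 1) := by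
  simp only [map_sum, map_smul, FunLike.coe_sum, Finset.sum_apply,
    FunLike.coe_smul, Pi.smul_apply, smul_eq_mul, Finset.mul_sum]
  rw [Finset.sum_comm]
  exact Finset.sum_congr rfl fun i _ => Finset.sum_congr rfl fun j _ => by ring

lemma pd_neg (i : Fin 3) (f : E3 → ℝ) (x : E3) : pd i (fun y => -f y) x = -pd i f x := by
  simp [pd, fderiv_fun_neg]

lemma gradSq_neg (g : E3 → Matrix (Fin 3) (Fin 3) ℝ) (u : E3 → ℝ) (x : E3) :
    gradSq g (fun y => -u y) x = gradSq g u x := by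
  simp only [gradSq, pd_neg, mul_neg, neg_mul, neg_neg]

lemma graphInv_neg (g : E3 → Matrix (Fin 3) (Fin 3) ℝ) (u : E3 → ℝ) (x : E3) (i j : Fin 3) :
    graphInv g (fun y => -u y) x i j = graphInv g u x i j := by
  simp only [graphInv, gradSq_neg, pd_neg, mul_neg, Finset.sum_neg_distrib, neg_mul, neg_neg]

lemma hess_neg (g : E3 → Matrix (Fin 3) (Fin 3) ℝ) (u : E3 → ℝ) (i j : Fin 3) (x : E3) :
    hess g (fun y => -u y) i j x = -hess g u i j x := by
  simp only [hess, pd_neg, mul_neg, Finset.sum_neg_distrib, sub_neg_eq_add]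
  ring

lemma mc_neg (g : E3 → Matrix (Fin 3) (Fin 3) ℝ) (u : E3 → ℝ) (x : E3) :
    mc g (fun y => -u y) x = -mc g u x := by
  simp only [mc, graphInv_neg, hess_neg, gradSq_neg, mul_neg, neg_div, Finset.sum_neg_distrib]

lemma trk_neg_neg (g k : E3 → Matrix (Fin 3) (Fin 3) ℝ) (u : E3 → ℝ) (x : E3) :
    trk g (fun y => -k y) (fun y => -u y) x = -trk g k u x := by
  simp only [trk, graphInv_neg, Matrix.neg_apply, mul_neg, Finset.sum_neg_distrib]

section CriticalPoint

variable {g k : E3 → Matrix (Fin 3) (Fin 3) ℝ} {u : E3 → ℝ} {x : E3}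

lemma pd_eq_zero_of_fderiv_eq_zero (h : fderiv ℝ u x = 0) (i : Fin 3) : pd i u x = 0 := by
  simp [pd, h]

lemma graphInv_of_fderiv_eq_zero (h : fderiv ℝ u x = 0) (i j : Fin 3) :
    graphInv g u x i j = ginv g x i j := by
  simp [graphInv, gradSq, pd_eq_zero_of_fderiv_eq_zero h]

lemma pd_pd_eq_fderiv_fderiv (hu : DifferentiableAt ℝ (fderiv ℝ u) x) (i j : Fin 3) :
    pd i (fun y => pd j u y) x
      = fderiv ℝ (fderiv ℝ u) x (EuclideanSpace.single i 1) (EuclideanSpace.single j 1) := by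
  have h := ((ContinuousLinearMap.apply ℝ ℝ (EuclideanSpace.single j 1 : E3)).hasFDerivAt.comp x
    hu.hasFDerivAt).fderiv
  rw [pd, show (fun y => pd j u y) = ContinuousLinearMap.apply ℝ ℝ (EuclideanSpace.single j 1) ∘
    fderiv ℝ u from rfl, h]
  rfl

lemma mc_of_fderiv_eq_zero (h : fderiv ℝ u x = 0) (hu : DifferentiableAt ℝ (fderiv ℝ u) x) :
    mc g u x = ∑ i, ∑ j, ginv g x i j *
      fderiv ℝ (fderiv ℝ u) x (EuclideanSpace.single i 1) (EuclideanSpace.single j 1) := by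
  simp [mc, hess, gradSq, graphInv_of_fderiv_eq_zero h, pd_eq_zero_of_fderiv_eq_zero h,
    pd_pd_eq_fderiv_fderiv hu]

lemma trk_of_fderiv_eq_zero (h : fderiv ℝ u x = 0) :
    trk g k u x = ∑ i, ∑ j, ginv g x i j * k x i j := by
  simp [trk, graphInv_of_fderiv_eq_zero h]

lemma mc_nonpos_of_isLocalMax (hg : (g x).PosDef) (hu : ContDiffAt ℝ 2 u x)
    (hmax : IsLocalMax u x) : mc g u x ≤ 0 := by
  have hd2 : DifferentiableAt ℝ (fderiv ℝ u) x :=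
    (hu.fderiv_right (m := 1) (by norm_num)).differentiableAt one_ne_zero
  have hhess : ∀ v : Fin 3 → ℝ, ∑ i, ∑ j,
      (Matrix.of fun i j => fderiv ℝ (fderiv ℝ u) x (EuclideanSpace.single i 1)
        (EuclideanSpace.single j 1)) i j * v i * v j ≤ 0 * ∑ i, ∑ j, g x i j * v i * v j := by
    intro v
    rw [zero_mul]
    simpa only [Matrix.of_apply, ContinuousLinearMap.sum_sum_apply_single_mul_mul]
      using hmax.fderiv_fderiv_apply_self_nonpos hu _
  rw [mc_of_fderiv_eq_zero hmax.fderiv_eq_zero hd2]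
  simpa [ginv] using hg.sum_sum_inv_mul_le hhess

lemma neg_trk_le_of_fderiv_eq_zero (hg : (g x).PosDef) (h : fderiv ℝ u x = 0) {C : ℝ}
    (hk : ∀ v : Fin 3 → ℝ,
      |∑ i, ∑ j, k x i j * v i * v j| ≤ C * ∑ i, ∑ j, g x i j * v i * v j) :
    -trk g k u x ≤ 3 * C := by
  have hnegk : ∀ v : Fin 3 → ℝ, ∑ i, ∑ j, (-k x) i j * v i * v j
      ≤ C * ∑ i, ∑ j, g x i j * v i * v j := fun v => by
    simpa only [Matrix.neg_apply, neg_mul, Finset.sum_neg_distrib]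
      using (neg_le_abs _).trans (hk v)
  rw [trk_of_fderiv_eq_zero h]
  simpa [ginv] using hg.sum_sum_inv_mul_le hnegk

lemma mc_sub_trk_le_of_isLocalMax (hg : (g x).PosDef) (hu : ContDiffAt ℝ 2 u x)
    (hmax : IsLocalMax u x) {C : ℝ} (hk : ∀ v : Fin 3 → ℝ,
      |∑ i, ∑ j, k x i j * v i * v j| ≤ C * ∑ i, ∑ j, g x i j * v i * v j) :
    mc g u x - trk g k u x ≤ 3 * C := by
  linarith [mc_nonpos_of_isLocalMax hg hu hmax,
    neg_trk_le_of_fderiv_eq_zero hg hmax.fderiv_eq_zero hk]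

end CriticalPoint

theorem mul_le_max_of_regularized_jang {g k : E3 → Matrix (Fin 3) (Fin 3) ℝ}
    (hg : ∀ x, (g x).PosDef) {Ω : Set E3} (hΩo : IsOpen Ω) (hΩb : Bornology.IsBounded Ω)
    {u : E3 → ℝ} {τ C Cφ : ℝ} (hτ : 0 ≤ τ) (hu : ContDiffOn ℝ 2 u (closure Ω))
    (heq : ∀ x ∈ Ω, mc g u x - trk g k u x = τ * u x)
    (hk : ∀ x ∈ Ω, ∀ v : Fin 3 → ℝ,
      |∑ i, ∑ j, k x i j * v i * v j| ≤ C * ∑ i, ∑ j, g x i j * v i * v j)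
    (hbdry : ∀ x ∈ frontier Ω, u x ≤ Cφ) :
    ∀ x ∈ Ω, τ * u x ≤ max (3 * C) (τ * Cφ) := by
  intro x hx
  obtain ⟨x₀, hx₀, hmax⟩ :=
    hΩb.isCompact_closure.exists_isMaxOn ⟨x, subset_closure hx⟩ hu.continuousOn
  have hle : τ * u x ≤ τ * u x₀ := mul_le_mul_of_nonneg_left (hmax (subset_closure hx)) hτ
  by_cases hx₀Ω : x₀ ∈ Ω
  · have hnhds : closure Ω ∈ 𝓝 x₀ := mem_of_superset (hΩo.mem_nhds hx₀Ω) subset_closure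
    have hcrit := mc_sub_trk_le_of_isLocalMax (hg x₀) (hu.contDiffAt hnhds)
      (hmax.isLocalMax hnhds) (hk x₀ hx₀Ω)
    linarith [heq x₀ hx₀Ω, le_max_left (3 * C) (τ * Cφ)]
  · have hfr : x₀ ∈ frontier Ω := by rw [hΩo.frontier_eq]; exact ⟨hx₀, hx₀Ω⟩
    nlinarith [hbdry x₀ hfr, le_max_right (3 * C) (τ * Cφ)]

theorem stmt2_general (g k : E3 → Matrix (Fin 3) (Fin 3) ℝ)
    (hg : ∀ x, (g x).PosDef)
    (Ω : Set E3) (hΩo : IsOpen Ω) (hΩb : Bornology.IsBounded Ω)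
    (u φ : E3 → ℝ) (τ Ck Cφ : ℝ) (hτ : 0 < τ)
    (hu : ContDiffOn ℝ 2 u (closure Ω))
    (heq : ∀ x ∈ Ω, mc g u x - trk g k u x = τ * u x)
    (hbdry : ∀ x ∈ frontier Ω, u x = φ x)
    (hk : ∀ x ∈ closure Ω, ∀ v : Fin 3 → ℝ,
      |∑ i, ∑ j, k x i j * v i * v j| ≤ Ck * ∑ i, ∑ j, g x i j * v i * v j)
    (hφ : ∀ x ∈ frontier Ω, |φ x| ≤ Cφ) :
    ∀ x ∈ Ω, τ * |u x| ≤ max (3 * Ck) (τ * Cφ) := by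
  intro x hx
  have hkΩ := fun y (hy : y ∈ Ω) => hk y (subset_closure hy)
  have hbdry_abs : ∀ y ∈ frontier Ω, |u y| ≤ Cφ := fun y hy => hbdry y hy ▸ hφ y hy
  have hupper := mul_le_max_of_regularized_jang hg hΩo hΩb hτ.le hu heq hkΩ
    (fun y hy => (le_abs_self _).trans (hbdry_abs y hy)) x hx
  have hlower := mul_le_max_of_regularized_jang (k := fun y => -k y) hg hΩo hΩb hτ.le hu.neg
    (fun y hy => by rw [mc_neg, trk_neg_neg]; linarith [heq y hy])
    (fun y hy v => by simpa [Matrix.neg_apply, Finset.sum_neg_distrib] using hkΩ y hy v)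
    (fun y hy => (neg_le_abs _).trans (hbdry_abs y hy)) x hx
  rw [abs_eq_max_neg, mul_max_of_nonneg _ _ hτ.le]
  exact max_le hupper hlower

/-- Maximum-principle estimate for solutions of the regularized Jang equation
`ℋ(u_τ) - tr(k)(u_τ) = τ u_τ`, `u_τ = φ` on `∂Ω`:
`sup_Ω τ|u_τ| ≤ max {3‖k‖_{C⁰(Ω̄)}, τ‖φ‖_{C⁰(∂Ω)}}`. -/
theorem stmt2 (g k : E3 → Matrix (Fin 3) (Fin 3) ℝ)
    (hg : ∀ x, (g x).PosDef) (hgsym : ∀ x, (g x).IsSymm)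
    (hgC1 : ∀ i j, ContDiff ℝ 1 fun x => g x i j)
    (Ω : Set E3) (hΩo : IsOpen Ω) (hΩb : Bornology.IsBounded Ω)
    (u φ : E3 → ℝ) (τ Ck Cφ : ℝ) (hτ : 0 < τ) (hτ1 : τ ≤ 1)
    (hu : ContDiffOn ℝ 2 u (closure Ω)) (huc : ContinuousOn u (closure Ω))
    (heq : ∀ x ∈ Ω, mc g u x - trk g k u x = τ * u x)
    (hbdry : ∀ x ∈ frontier Ω, u x = φ x)
    (hk : ∀ x ∈ closure Ω, ∀ v : Fin 3 → ℝ,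
      |∑ i, ∑ j, k x i j * v i * v j| ≤ Ck * ∑ i, ∑ j, g x i j * v i * v j)
    (hφ : ∀ x ∈ frontier Ω, |φ x| ≤ Cφ) :
    ∀ x ∈ Ω, τ * |u x| ≤ max (3 * Ck) (τ * Cφ) :=
  stmt2_general g k hg Ω hΩo hΩb u φ τ Ck Cφ hτ hu heq hbdry hk hφ
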